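/- arXiv:2002.10700 — 3 statements merged into one kernel-verified Lean document; each statement's English description precedes it below -/
import Mathlib

section
/- Let 𝒜 be an abelian category and let C be a chain complex in 𝒜 which in four consecutive degrees has the form ⋯ → U →(a,b)ᵗ→ V ⊕ W →[[c,d],[e,f]]→ X ⊕ Y →(g,h)→ Z → ⋯ (with arbitrary entries and differentials elsewhere), and suppose the component d : W → X is an isomorphism with inverse d′ : X → W. Then the sequence ⋯ → U →a→ V →(e − f∘d′∘c)→ Y →h→ Z → ⋯ (agreeing with C in all other degrees) is again a chain complex, and the degreewise map from C to this new complex given by the identity in all other degrees, by (1, 0) : V ⊕ W → V, and by (−f∘d′, 1) : X ⊕ Y → Y, is a chain map and a quasi-isomorphism. -/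
/-!
Write `M` for the middle differential and `r` for the comparison map. In degrees `n + 2` and
`n + 1`, `r = (1, 0)` and `r = (−f∘d', 1)` have the sections `s = (1, −d'∘c)ᵗ` and `s = (0, 1)ᵗ`,
and because `d` is invertible the idempotent `s∘r` differs from the identity by the null-homotopic
map `M∘h + h∘M`, where `h : X ⊕ Y → V ⊕ W` sends `(x, y)` to `(0, −d' x)`. So the new complex is
the image of a split idempotent chain map homotopic to the identity, with differential `r∘M∘s`,
and `r` is a homotopy equivalence.
-/

open CategoryTheory Category Limits

namespace CategoryTheory.Limits.biprod

variable {𝒜 : Type*} [Category 𝒜] [Preadditive 𝒜] [HasBinaryBiproducts 𝒜] {V W X Y : 𝒜}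
  (c : V ⟶ X) (d : W ⟶ X) (e : V ⟶ Y) (f : W ⟶ Y) (d' : X ⟶ W)

lemma lift_comp_desc_comp_desc_of_inv (hd' : d' ≫ d = 𝟙 X) :
    lift (𝟙 V) (-c ≫ d') ≫ desc (lift c e) (lift d f) ≫ desc (-d' ≫ f) (𝟙 Y) =
      e - c ≫ d' ≫ f := by
  simp only [lift_desc_assoc, lift_desc, id_comp, comp_id, assoc, Preadditive.neg_comp,
    Preadditive.comp_neg, Preadditive.add_comp, Preadditive.comp_add, reassoc_of% hd',
    neg_add_cancel, comp_zero, neg_zero, add_zero]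
  abel

lemma fst_comp_lift_eq_of_inv (hd : d ≫ d' = 𝟙 W) :
    fst ≫ lift (𝟙 V) (-c ≫ d') =
      desc (lift c e) (lift d f) ≫ desc (-d' ≫ inr) 0 + 𝟙 (V ⊞ W) := by
  ext <;> simp [reassoc_of% hd]

lemma desc_comp_inr_eq_of_inv (hd' : d' ≫ d = 𝟙 X) :
    desc (-d' ≫ f) (𝟙 Y) ≫ inr =
      desc (-d' ≫ inr) 0 ≫ desc (lift c e) (lift d f) + 𝟙 (X ⊞ Y) := by
  ext <;> simp [hd']

end CategoryTheory.Limits.biprod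

lemma exists_retraction_replacing_two {ι 𝒜 : Type*} [Category 𝒜] (F : ι → 𝒜) {i j : ι}
    (hij : i ≠ j) {A B : 𝒜} (rA : F i ⟶ A) (sA : A ⟶ F i) (hA : sA ≫ rA = 𝟙 A)
    (rB : F j ⟶ B) (sB : B ⟶ F j) (hB : sB ≫ rB = 𝟙 B) :
    ∃ (G : ι → 𝒜) (r : ∀ k, F k ⟶ G k) (s : ∀ k, G k ⟶ F k)
      (gA : G i ≅ A) (gB : G j ≅ B) (g : ∀ k, k ≠ j → k ≠ i → (G k ≅ F k)),
      (∀ k, s k ≫ r k = 𝟙 (G k)) ∧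
      (∀ k hj hi, r k = (g k hj hi).inv ∧ s k = (g k hj hi).hom) ∧
      r i = rA ≫ gA.inv ∧ s i = gA.hom ≫ sA ∧ r j = rB ≫ gB.inv ∧ s j = gB.hom ≫ sB := by
  classical
  let G : ι → 𝒜 := fun k => if k = i then A else if k = j then B else F k
  let gA : G i ≅ A := eqToIso (if_pos rfl)
  let gB : G j ≅ B := eqToIso ((if_neg hij.symm).trans (if_pos rfl))
  let g : ∀ k, k ≠ j → k ≠ i → (G k ≅ F k) := fun k hj hi =>
    eqToIso ((if_neg hi).trans (if_neg hj))
  let r : ∀ k, F k ⟶ G k := fun k =>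
    if hi : k = i then eqToHom (by rw [hi]) ≫ rA ≫ gA.inv ≫ eqToHom (by rw [hi])
    else if hj : k = j then eqToHom (by rw [hj]) ≫ rB ≫ gB.inv ≫ eqToHom (by rw [hj])
    else (g k hj hi).inv
  let s : ∀ k, G k ⟶ F k := fun k =>
    if hi : k = i then eqToHom (by rw [hi]) ≫ gA.hom ≫ sA ≫ eqToHom (by rw [hi])
    else if hj : k = j then eqToHom (by rw [hj]) ≫ gB.hom ≫ sB ≫ eqToHom (by rw [hj])
    else (g k hj hi).hom
  refine ⟨G, r, s, gA, gB, g, fun k => ?_, fun k hj hi => by simp [r, s, hi, hj], ?_, ?_, ?_, ?_⟩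
  · by_cases hi : k = i
    · subst hi; simp [r, s, reassoc_of% hA]
    by_cases hj : k = j
    · subst hj; simp [r, s, hi, reassoc_of% hB]
    · simp [r, s, hi, hj]
  all_goals simp [r, s, hij.symm]

namespace HomologicalComplex

variable {ι : Type*} {c : ComplexShape ι} {𝒜 : Type*} [Category 𝒜] [Preadditive 𝒜]
  (C : HomologicalComplex 𝒜 c) {X' : ι → 𝒜} (r : ∀ i, C.X i ⟶ X' i) (s : ∀ i, X' i ⟶ C.X i)
  (P : C ⟶ C) (hP : ∀ i, r i ≫ s i = P.f i)

def ofSplitIdempotent : HomologicalComplex 𝒜 c where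
  X := X'
  d i j := s i ≫ C.d i j ≫ r j
  shape i j hij := by
    rw [C.shape i j hij, zero_comp, comp_zero]
  d_comp_d' i j k _ _ := by
    rw [assoc, assoc, reassoc_of% hP j, P.comm_assoc, d_comp_d_assoc, zero_comp, comp_zero]

def toOfSplitIdempotent (hsr : ∀ i, s i ≫ r i = 𝟙 (X' i)) :
    C ⟶ ofSplitIdempotent C r s P hP where
  f := r
  comm' i j _ := by
    show r i ≫ s i ≫ C.d i j ≫ r j = C.d i j ≫ r j
    rw [reassoc_of% hP i, P.comm_assoc, ← hP j, assoc, hsr j, comp_id]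

def fromOfSplitIdempotent (hsr : ∀ i, s i ≫ r i = 𝟙 (X' i)) :
    ofSplitIdempotent C r s P hP ⟶ C where
  f := s
  comm' i j _ := by
    show s i ≫ C.d i j = (s i ≫ C.d i j ≫ r j) ≫ s j
    rw [assoc, assoc, hP j, ← P.comm, ← hP i, assoc, reassoc_of% hsr i]

def homotopyEquivOfSplitIdempotent (hsr : ∀ i, s i ≫ r i = 𝟙 (X' i))
    (h : Homotopy P (𝟙 C)) :
    HomotopyEquiv C (ofSplitIdempotent C r s P hP) where
  hom := toOfSplitIdempotent C r s P hP hsr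
  inv := fromOfSplitIdempotent C r s P hP hsr
  homotopyHomInvId := (Homotopy.ofEq (by ext i; exact hP i)).trans h
  homotopyInvHomId := Homotopy.ofEq (by ext i; exact hsr i)

lemma exists_homotopy_id_of_edge {i j : ι} (hij : c.Rel i j)
    (hne : i ≠ j) (h : C.X j ⟶ C.X i) :
    ∃ P : C ⟶ C, Nonempty (Homotopy P (𝟙 C)) ∧ P.f i = C.d i j ≫ h + 𝟙 _ ∧
      P.f j = h ≫ C.d i j + 𝟙 _ ∧ ∀ k, k ≠ i → k ≠ j → P.f k = 𝟙 _ := by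
  classical
  let H : ∀ k l, C.X k ⟶ C.X l := fun k l =>
    if hkl : k = j ∧ l = i then eqToHom (by rw [hkl.1]) ≫ h ≫ eqToHom (by rw [hkl.2]) else 0
  have hH : H j i = h := by simp [H]
  have hH_left : ∀ k l, k ≠ j → H k l = 0 := fun k l hk => dif_neg fun hkl => hk hkl.1
  have hH_right : ∀ k l, l ≠ i → H k l = 0 := fun k l hl => dif_neg fun hkl => hl hkl.2
  refine ⟨Homotopy.nullHomotopicMap H + 𝟙 C,
    ⟨{ hom := H
       zero := fun k l hlk => dif_neg fun ⟨hk, hl⟩ => hlk (hk ▸ hl ▸ hij)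
       comm := fun _ => rfl }⟩, ?_, ?_, ?_⟩
  · show dNext i H + prevD i H + 𝟙 _ = _
    rw [dNext_eq H hij, hH, prevD, AddMonoidHom.mk'_apply, hH_left _ _ hne, zero_comp, add_zero]
  · show dNext j H + prevD j H + 𝟙 _ = _
    rw [prevD_eq H hij, hH, dNext, AddMonoidHom.mk'_apply, hH_right _ _ hne.symm, comp_zero,
      zero_add]
  · intro k hki hkj
    show dNext k H + prevD k H + 𝟙 _ = _
    rw [dNext, prevD, AddMonoidHom.mk'_apply, AddMonoidHom.mk'_apply, hH_right _ _ hki,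
      hH_left _ _ hkj, comp_zero, zero_comp, add_zero, zero_add]

end HomologicalComplex

/-- **Elimination of trivial summands.**
Let `C` be a chain complex (indexed by `ℤ`) in an abelian category `𝒜` which in four
consecutive degrees has the form
`⋯ → U →(a,b)ᵗ→ V ⊕ W →[[c,d],[e,f]]→ X ⊕ Y →(g,h)→ Z → ⋯`,
and suppose the component `d : W → X` is an isomorphism (with inverse `d'`).
Then there is a chain complex `D` agreeing with `C` in all other degrees, having
`V` in degree `n+2` and `Y` in degree `n+1`, whose middle differential is
`e − f ∘ d' ∘ c : V → Y`, together with a chain map `φ : C ⟶ D` which is the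
identity in all other degrees, `(1, 0) : V ⊕ W → V` in degree `n+2` and
`(−f ∘ d', 1) : X ⊕ Y → Y` in degree `n+1`; and `φ` is a quasi-isomorphism. -/
theorem elimination_of_trivial_summands
    {𝒜 : Type*} [Category 𝒜] [Abelian 𝒜]
    (C : ChainComplex 𝒜 ℤ) (n : ℤ) (V W X Y : 𝒜)
    (e₂ : C.X (n + 2) ≅ V ⊞ W) (e₁ : C.X (n + 1) ≅ X ⊞ Y)
    -- the components of the middle differential `V ⊕ W → X ⊕ Y`:
    (c : V ⟶ X) (d : W ⟶ X) (e : V ⟶ Y) (f : W ⟶ Y)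
    (hdiff : e₂.inv ≫ C.d (n + 2) (n + 1) ≫ e₁.hom =
      biprod.desc (biprod.lift c e) (biprod.lift d f))
    -- `d` is an isomorphism, with inverse `d'`:
    (d' : X ⟶ W) (hd : d ≫ d' = 𝟙 W) (hd' : d' ≫ d = 𝟙 X) :
    ∃ (D : ChainComplex 𝒜 ℤ) (φ : C ⟶ D)
      (g₂ : D.X (n + 2) ≅ V) (g₁ : D.X (n + 1) ≅ Y)
      (g : ∀ k : ℤ, k ≠ n + 1 → k ≠ n + 2 → (D.X k ≅ C.X k)),
      -- `φ` is the identity in all other degrees ...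
      (∀ (k : ℤ) (h₁ : k ≠ n + 1) (h₂ : k ≠ n + 2), φ.f k = (g k h₁ h₂).inv) ∧
      -- ... is `(1, 0) : V ⊕ W → V` in degree `n + 2` ...
      φ.f (n + 2) = e₂.hom ≫ biprod.fst ≫ g₂.inv ∧
      -- ... and is `(−f∘d', 1) : X ⊕ Y → Y` in degree `n + 1`:
      φ.f (n + 1) = e₁.hom ≫ biprod.desc (-(d' ≫ f)) (𝟙 Y) ≫ g₁.inv ∧
      -- the middle differential of `D` is `e − f ∘ d' ∘ c : V → Y`:
      g₂.inv ≫ D.d (n + 2) (n + 1) ≫ g₁.hom = e - c ≫ d' ≫ f ∧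
      -- `φ` is a quasi-isomorphism:
      QuasiIso φ := by
  have hM : C.d (n + 2) (n + 1) =
      e₂.hom ≫ biprod.desc (biprod.lift c e) (biprod.lift d f) ≫ e₁.inv := by
    rw [← hdiff]; simp
  obtain ⟨DX, r, s, g₂, g₁, g, hsr, hrs_other, hr₂, hs₂, hr₁, hs₁⟩ :=
    exists_retraction_replacing_two C.X (show n + 2 ≠ n + 1 by omega)
      (e₂.hom ≫ biprod.fst) (biprod.lift (𝟙 V) (-(c ≫ d')) ≫ e₂.inv) (by simp)
      (e₁.hom ≫ biprod.desc (-(d' ≫ f)) (𝟙 Y)) (biprod.inr ≫ e₁.inv) (by simp)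
  obtain ⟨P, ⟨hP⟩, hP₂, hP₁, hP_other⟩ := HomologicalComplex.exists_homotopy_id_of_edge C
    (show (ComplexShape.down ℤ).Rel (n + 2) (n + 1) by simp; omega) (by omega)
    (e₁.hom ≫ biprod.desc (-(d' ≫ biprod.inr)) 0 ≫ e₂.inv)
  have hrs : ∀ k, r k ≫ s k = P.f k := by
    intro k
    obtain rfl | h₂ := eq_or_ne k (n + 2)
    · simp [hr₂, hs₂, hP₂, hM, reassoc_of% biprod.fst_comp_lift_eq_of_inv c d e f d' hd,
        Preadditive.add_comp, Preadditive.comp_add]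
    obtain rfl | h₁ := eq_or_ne k (n + 1)
    · simp [hr₁, hs₁, hP₁, hM, reassoc_of% biprod.desc_comp_inr_eq_of_inv c d e f d' hd',
        Preadditive.add_comp, Preadditive.comp_add]
    · simp [hrs_other k h₁ h₂, hP_other k h₂ h₁]
  refine ⟨_, HomologicalComplex.toOfSplitIdempotent C r s P hrs hsr, g₂, g₁, g,
    fun k h₁ h₂ => (hrs_other k h₁ h₂).1, hr₂.trans (assoc _ _ _), hr₁.trans (assoc _ _ _), ?_,
    (HomologicalComplex.homotopyEquivOfSplitIdempotent C r s P hrs hsr hP).quasiIso_hom⟩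
  show g₂.inv ≫ (s (n + 2) ≫ C.d (n + 2) (n + 1) ≫ r (n + 1)) ≫ g₁.hom = _
  simp [hs₂, hr₁, hM, reassoc_of% biprod.lift_comp_desc_comp_desc_of_inv c d e f d' hd']
end

section
/- The endomorphism algebra End_A(P(s)) of the right A-module P(s) = 1_s·A is isomorphic, as a ℂ-algebra, to ℂ[X]/(X²), via an isomorphism sending X to left multiplication by the loop ab; in particular ab ≠ 0 in A and (ab)² = 0. Moreover End_A(P(e)) ≅ ℂ, i.e. every endomorphism of P(e) = 1_e·A is a scalar multiple of the identity. -/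
open CategoryTheory MulOpposite Polynomial

namespace Sl2Q

/-- Generators of the path algebra of the quiver `e ⇄ s`:
`0 ↦ 1_e`, `1 ↦ 1_s`, `2 ↦ a : e → s`, `3 ↦ b : s → e`. -/
abbrev FA : Type := FreeAlgebra ℂ (Fin 4)

/-- The defining relations of the path algebra `ℂQ/(ba)`:
the trivial paths are orthogonal idempotents summing to `1`, the arrows are
compatible with sources and targets, and the path `e → s → e` (first `a`, then `b`,
written `b * a`) is zero. -/
inductive PathRel : FA → FA → Prop
  | idem_e : PathRel (FreeAlgebra.ι ℂ 0 * FreeAlgebra.ι ℂ 0) (FreeAlgebra.ι ℂ 0)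
  | idem_s : PathRel (FreeAlgebra.ι ℂ 1 * FreeAlgebra.ι ℂ 1) (FreeAlgebra.ι ℂ 1)
  | orth_es : PathRel (FreeAlgebra.ι ℂ 0 * FreeAlgebra.ι ℂ 1) 0
  | orth_se : PathRel (FreeAlgebra.ι ℂ 1 * FreeAlgebra.ι ℂ 0) 0
  | sum_one : PathRel (FreeAlgebra.ι ℂ 0 + FreeAlgebra.ι ℂ 1) 1
  | a_tgt : PathRel (FreeAlgebra.ι ℂ 1 * FreeAlgebra.ι ℂ 2) (FreeAlgebra.ι ℂ 2)
  | a_src : PathRel (FreeAlgebra.ι ℂ 2 * FreeAlgebra.ι ℂ 0) (FreeAlgebra.ι ℂ 2)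
  | b_tgt : PathRel (FreeAlgebra.ι ℂ 0 * FreeAlgebra.ι ℂ 3) (FreeAlgebra.ι ℂ 3)
  | b_src : PathRel (FreeAlgebra.ι ℂ 3 * FreeAlgebra.ι ℂ 1) (FreeAlgebra.ι ℂ 3)
  | ba : PathRel (FreeAlgebra.ι ℂ 3 * FreeAlgebra.ι ℂ 2) 0

/-- The path algebra `A = ℂ[e ⇄ s]/(ba)`. -/
def A : Type := RingQuot PathRel

noncomputable instance : Ring A := inferInstanceAs (Ring (RingQuot PathRel))
noncomputable instance : Algebra ℂ A := inferInstanceAs (Algebra ℂ (RingQuot PathRel))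

noncomputable def toA : FreeAlgebra ℂ (Fin 4) →ₐ[ℂ] A := RingQuot.mkAlgHom ℂ PathRel

noncomputable def gen (i : Fin 4) : A := toA (FreeAlgebra.ι ℂ i)

/-- the idempotent `1_e` -/
noncomputable def oneE : A := gen 0
/-- the idempotent `1_s` -/
noncomputable def oneS : A := gen 1
/-- the arrow `a : e → s` -/
noncomputable def arrA : A := gen 2
/-- the arrow `b : s → e` -/
noncomputable def arrB : A := gen 3
/-- the loop `ab` at `s` (first `b`, then `a`) -/
noncomputable def ab : A := arrA * arrB

lemma rel_eq {x y : FA} (h : PathRel x y) : toA x = toA y :=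
  RingQuot.mkAlgHom_rel ℂ h

lemma oneS_mul_arrA : oneS * arrA = arrA := by
  rw [oneS, arrA, gen, gen, ← map_mul]
  exact rel_eq PathRel.a_tgt

lemma oneE_mul_arrB : oneE * arrB = arrB := by
  rw [oneE, arrB, gen, gen, ← map_mul]
  exact rel_eq PathRel.b_tgt

lemma oneS_mul_ab : oneS * ab = ab := by
  rw [ab, ← mul_assoc, oneS_mul_arrA]

/-- `A` is a right module over itself, i.e. a module over `Aᵐᵒᵖ`;
scalars `ℂ` act compatibly. -/
instance : IsScalarTower ℂ Aᵐᵒᵖ A :=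
  ⟨fun c r x => by
    rw [MulOpposite.smul_eq_mul_unop, MulOpposite.smul_eq_mul_unop, MulOpposite.unop_smul,
      mul_smul_comm]⟩

instance : SMulCommClass Aᵐᵒᵖ ℂ A :=
  ⟨fun r c x => by
    rw [MulOpposite.smul_eq_mul_unop, MulOpposite.smul_eq_mul_unop, smul_mul_assoc]⟩

/-- `P u = u·A`, the right ideal generated by `u`, as a right `A`-module
(i.e. a module over `Aᵐᵒᵖ`). -/
noncomputable def P (u : A) : Submodule Aᵐᵒᵖ A := Submodule.span Aᵐᵒᵖ {u}

lemma mem_P {u z : A} (h : u * z = z) : z ∈ P u :=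
  Submodule.mem_span_singleton.mpr ⟨op z, by rw [op_smul_eq_mul, h]⟩

instance (p : Submodule Aᵐᵒᵖ A) : SMulCommClass Aᵐᵒᵖ ℂ ↥p :=
  ⟨fun r c x => Subtype.ext (smul_comm r c (x : A))⟩

instance (p : Submodule Aᵐᵒᵖ A) : IsScalarTower ℂ Aᵐᵒᵖ ↥p :=
  ⟨fun c r x => Subtype.ext (smul_assoc c r (x : A))⟩

/-- Left multiplication by `z` as a homomorphism of right `A`-modules `P u ⟶ P v`,
where `v * z = z` (i.e. `z ∈ v·A`). -/
noncomputable def lmul (u : A) {v z : A} (h : v * z = z) : ↥(P u) →ₗ[Aᵐᵒᵖ] ↥(P v) where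
  toFun x := ⟨z * (x : A), mem_P (by rw [← mul_assoc, h])⟩
  map_add' x y := Subtype.ext (by simp [mul_add])
  map_smul' r x := Subtype.ext (by
    simp [MulOpposite.smul_eq_mul_unop, mul_assoc])

end Sl2Q

/-!
For an idempotent `u` of a ring `R`, an endomorphism `ψ` of the right ideal `uR` is left
multiplication by `ψ u`, which lies in the corner `uRu`. The five paths `1_e, 1_s, a, b, ab`
span `A`, so the corners are `1_s A 1_s = ℂ 1_s + ℂ ab` and `1_e A 1_e = ℂ 1_e`; that `1_s` and
`ab` are independent is seen on the left ideal `A 1_s`. Hence `End(P(s))` is generated by the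
non-scalar square-zero element "left multiplication by `ab`", whose minimal polynomial is
therefore `X²`.
-/

theorem minpoly_eq_X_sq {K B : Type*} [Field K] [Ring B] [Algebra K B] {x : B}
    (hx : x * x = 0) (hx_notMem : x ∉ Set.range (algebraMap K B)) : minpoly K x = X ^ 2 := by
  have : Nontrivial B := ⟨⟨x, algebraMap K B 0, fun h => hx_notMem ⟨0, h.symm⟩⟩⟩
  have hroot : aeval x (X ^ 2 : K[X]) = 0 := by rw [map_pow, aeval_X, sq, hx]
  have hint : IsIntegral K x := ⟨X ^ 2, monic_X_pow 2, hroot⟩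
  refine (minpoly.unique_of_degree_le_degree_minpoly K x (monic_X_pow 2) hroot ?_).symm
  rw [degree_X_pow, degree_eq_natDegree (minpoly.ne_zero hint)]
  exact_mod_cast (minpoly.two_le_natDegree_iff hint).mpr hx_notMem

theorem exists_algEquiv_quotient_X_sq {K B : Type*} [Field K] [Ring B] [Algebra K B] {x : B}
    (hx : x * x = 0) (hx_notMem : x ∉ Set.range (algebraMap K B))
    (hgen : Function.Surjective (aeval x : K[X] →ₐ[K] B)) :
    ∃ φ : (K[X] ⧸ Ideal.span {(X : K[X]) ^ 2}) ≃ₐ[K] B, φ (Ideal.Quotient.mk _ X) = x := by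
  have hker : Ideal.span {(X : K[X]) ^ 2} = RingHom.ker (aeval x : K[X] →ₐ[K] B) := by
    rw [minpoly.ker_aeval_eq_span_minpoly, minpoly_eq_X_sq hx hx_notMem]
  refine ⟨(Ideal.quotientEquivAlgOfEq K hker).trans
    (Ideal.quotientKerAlgEquivOfSurjective hgen), ?_⟩
  simp

namespace IsIdempotentElem

variable {R : Type*} [Ring R] {u : R}

theorem mul_eq_self_of_mem_span (hu : IsIdempotentElem u) {x : R}
    (hx : x ∈ Submodule.span Rᵐᵒᵖ {u}) : u * x = x := by
  obtain ⟨r, rfl⟩ := Submodule.mem_span_singleton.mp hx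
  rw [MulOpposite.smul_eq_mul_unop, ← mul_assoc, hu.eq]

theorem end_apply_eq_mul (hu : IsIdempotentElem u)
    (ψ : Module.End Rᵐᵒᵖ (Submodule.span Rᵐᵒᵖ {u})) (x : Submodule.span Rᵐᵒᵖ {u}) :
    (ψ x : R) = ψ ⟨u, Submodule.mem_span_singleton_self u⟩ * x := by
  have hx : x = op (x : R) • ⟨u, Submodule.mem_span_singleton_self u⟩ :=
    Subtype.ext (hu.mul_eq_self_of_mem_span x.2).symm
  conv_lhs => rw [hx, map_smul]
  rfl

theorem mul_end_apply_mul (hu : IsIdempotentElem u)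
    (ψ : Module.End Rᵐᵒᵖ (Submodule.span Rᵐᵒᵖ {u})) :
    u * ψ ⟨u, Submodule.mem_span_singleton_self u⟩ * u =
      ψ ⟨u, Submodule.mem_span_singleton_self u⟩ := by
  rw [hu.mul_eq_self_of_mem_span (ψ _).2]
  exact (hu.end_apply_eq_mul ψ ⟨u, Submodule.mem_span_singleton_self u⟩).symm

end IsIdempotentElem

namespace Sl2Q

@[simp] theorem oneE_mul_oneE : oneE * oneE = oneE := by simpa [oneE, gen] using rel_eq .idem_e
@[simp] theorem oneS_mul_oneS : oneS * oneS = oneS := by simpa [oneS, gen] using rel_eq .idem_s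
@[simp] theorem oneE_mul_oneS : oneE * oneS = 0 := by
  simpa [oneE, oneS, gen] using rel_eq .orth_es
@[simp] theorem oneS_mul_oneE : oneS * oneE = 0 := by
  simpa [oneE, oneS, gen] using rel_eq .orth_se
theorem oneE_add_oneS : oneE + oneS = 1 := by
  simpa [oneE, oneS, gen] using rel_eq .sum_one
@[simp] theorem arrA_mul_oneE : arrA * oneE = arrA := by
  simpa [oneE, arrA, gen] using rel_eq .a_src
@[simp] theorem arrB_mul_oneS : arrB * oneS = arrB := by
  simpa [oneS, arrB, gen] using rel_eq .b_src
@[simp] theorem arrB_mul_arrA : arrB * arrA = 0 := by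
  simpa [arrA, arrB, gen] using rel_eq .ba

@[simp] theorem oneE_mul_arrA : oneE * arrA = 0 := by
  rw [← oneS_mul_arrA, ← mul_assoc, oneE_mul_oneS, zero_mul]
@[simp] theorem arrA_mul_oneS : arrA * oneS = 0 := by
  rw [← arrA_mul_oneE, mul_assoc, oneE_mul_oneS, mul_zero]
@[simp] theorem oneS_mul_arrB : oneS * arrB = 0 := by
  rw [← oneE_mul_arrB, ← mul_assoc, oneS_mul_oneE, zero_mul]
@[simp] theorem arrB_mul_oneE : arrB * oneE = 0 := by
  rw [← arrB_mul_oneS, mul_assoc, oneS_mul_oneE, mul_zero]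
@[simp] theorem arrA_mul_arrA : arrA * arrA = 0 := by
  simpa only [← mul_assoc, arrA_mul_oneE, mul_zero] using congrArg (arrA * ·) oneE_mul_arrA
@[simp] theorem arrB_mul_arrB : arrB * arrB = 0 := by
  simpa only [← mul_assoc, arrB_mul_oneS, mul_zero] using congrArg (arrB * ·) oneS_mul_arrB

@[simp] theorem oneE_mul_ab : oneE * ab = 0 := by rw [ab, ← mul_assoc]; simp
@[simp] theorem ab_mul_oneE : ab * oneE = 0 := by rw [ab, mul_assoc]; simp
@[simp] theorem ab_mul_oneS : ab * oneS = ab := by rw [ab, mul_assoc, arrB_mul_oneS]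
@[simp] theorem arrA_mul_ab : arrA * ab = 0 := by rw [ab, ← mul_assoc]; simp
@[simp] theorem ab_mul_arrA : ab * arrA = 0 := by rw [ab, mul_assoc]; simp
@[simp] theorem arrB_mul_ab : arrB * ab = 0 := by rw [ab, ← mul_assoc]; simp
@[simp] theorem ab_mul_arrB : ab * arrB = 0 := by rw [ab, mul_assoc]; simp
@[simp] theorem ab_mul_ab : ab * ab = 0 := by rw [ab, mul_assoc, ← mul_assoc arrB]; simp

theorem arrA_mul_arrB : arrA * arrB = ab := rfl

def paths : Set A := {oneE, oneS, arrA, arrB, ab}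

theorem mul_eq_zero_or_mem_paths {x y : A} (hx : x ∈ paths) (hy : y ∈ paths) :
    x * y = 0 ∨ x * y ∈ paths := by
  rcases hx with rfl | rfl | rfl | rfl | rfl <;> rcases hy with rfl | rfl | rfl | rfl | rfl <;>
    simp [paths, arrA_mul_arrB, oneE_mul_arrB, oneS_mul_arrA, oneS_mul_ab]

theorem adjoin_range_gen : Algebra.adjoin ℂ (Set.range gen) = ⊤ := by
  rw [show gen = toA ∘ FreeAlgebra.ι ℂ from rfl, Set.range_comp, Algebra.adjoin_image,
    FreeAlgebra.adjoin_range_ι, Algebra.map_top, AlgHom.range_eq_top]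
  exact RingQuot.mkAlgHom_surjective ℂ PathRel

open scoped Pointwise in
theorem span_paths_eq_top : Submodule.span ℂ paths = ⊤ := by
  have hmul : paths * paths ⊆ Submodule.span ℂ paths := by
    rintro _ ⟨x, hx, y, hy, rfl⟩
    rcases mul_eq_zero_or_mem_paths hx hy with h | h
    · simp only [SetLike.mem_coe, h, zero_mem]
    · exact Submodule.subset_span h
  have hone : (1 : A) ∈ Submodule.span ℂ paths := by
    rw [← oneE_add_oneS]
    exact add_mem (Submodule.subset_span (by simp [paths]))
      (Submodule.subset_span (by simp [paths]))
  let S : Subalgebra ℂ A := (Submodule.span ℂ paths).toSubalgebra hone fun x y hx hy =>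
    Submodule.span_le.mpr hmul
      (Submodule.span_mul_span ℂ paths paths ▸ Submodule.mul_mem_mul hx hy)
  have hS : Algebra.adjoin ℂ (Set.range gen) ≤ S := by
    refine Algebra.adjoin_le ?_
    rintro _ ⟨i, rfl⟩
    refine Submodule.subset_span ?_
    fin_cases i <;> simp [paths, oneE, oneS, arrA, arrB]
  rw [adjoin_range_gen, top_le_iff] at hS
  exact eq_top_iff.mpr fun y _ => (show y ∈ S from hS ▸ Algebra.mem_top)

theorem map_mem_of_forall_paths {M : Type*} [AddCommGroup M] [Module ℂ M] {W : Submodule ℂ M}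
    (f : A →ₗ[ℂ] M) (h : ∀ x ∈ paths, f x ∈ W) (y : A) : f y ∈ W :=
  Submodule.span_le (p := W.comap f) |>.mpr h (span_paths_eq_top ▸ Submodule.mem_top)

theorem oneS_mul_mul_oneS_mem_span (y : A) :
    oneS * y * oneS ∈ Submodule.span ℂ {oneS, ab} := by
  refine map_mem_of_forall_paths (LinearMap.mulLeftRight ℂ (oneS, oneS)) ?_ y
  rintro x (rfl | rfl | rfl | rfl | rfl) <;>
    simp [oneS_mul_arrA, oneS_mul_ab, Submodule.mem_span_of_mem]

theorem oneE_mul_mul_oneE_mem_span (y : A) : oneE * y * oneE ∈ Submodule.span ℂ {oneE} := by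
  refine map_mem_of_forall_paths (LinearMap.mulLeftRight ℂ (oneE, oneE)) ?_ y
  rintro x (rfl | rfl | rfl | rfl | rfl) <;>
    simp [oneE_mul_arrB, Submodule.mem_span_of_mem]

/-- Left multiplication by the generators on the left ideal `A·1_s`, in the basis `(1_s, b, ab)`.
-/
def genMatrix : Fin 4 → Matrix (Fin 3) (Fin 3) ℂ
  | 0 => !![0, 0, 0; 0, 1, 0; 0, 0, 0]
  | 1 => !![1, 0, 0; 0, 0, 0; 0, 0, 1]
  | 2 => !![0, 0, 0; 0, 0, 0; 0, 1, 0]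
  | 3 => !![0, 0, 0; 1, 0, 0; 0, 0, 0]

noncomputable def leftIdealRep : A →ₐ[ℂ] Matrix (Fin 3) (Fin 3) ℂ :=
  RingQuot.liftAlgHom ℂ ⟨FreeAlgebra.lift ℂ genMatrix, fun x y h => by
    cases h <;> ext i j <;> fin_cases i <;> fin_cases j <;>
      simp [genMatrix]⟩

theorem leftIdealRep_gen (i : Fin 4) : leftIdealRep (gen i) = genMatrix i :=
  (RingQuot.liftAlgHom_mkAlgHom_apply ℂ _ _ _).trans (FreeAlgebra.lift_ι_apply _ _)

theorem linearIndependent_oneS_ab : LinearIndependent ℂ ![oneS, ab] := by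
  refine LinearIndependent.pair_iff.mpr fun c d h => ?_
  have h' := congrArg leftIdealRep h
  simp only [map_add, map_smul, map_zero, ab, map_mul, oneS, arrA, arrB, leftIdealRep_gen] at h'
  have h00 := congrFun (congrFun h' 0) 0
  have h20 := congrFun (congrFun h' 2) 0
  simp [genMatrix] at h00 h20
  exact ⟨h00, h20⟩

theorem lmul_ab_mul_self : lmul oneS oneS_mul_ab * lmul oneS oneS_mul_ab = 0 :=
  LinearMap.ext fun x => Subtype.ext <| show ab * (ab * x) = 0 by
    rw [← mul_assoc, ab_mul_ab, zero_mul]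

theorem lmul_ab_notMem_range :
    lmul oneS oneS_mul_ab ∉ Set.range (algebraMap ℂ (Module.End Aᵐᵒᵖ (P oneS))) := by
  rintro ⟨c, hc⟩
  have h : c • oneS = ab := by
    simpa [lmul] using congrArg (fun ψ => (ψ ⟨oneS, mem_P oneS_mul_oneS⟩ : A)) hc
  have := LinearIndependent.pair_iff.mp linearIndependent_oneS_ab c (-1) (by simp [h])
  norm_num at this

theorem aeval_lmul_ab_surjective :
    Function.Surjective
      (aeval (lmul oneS oneS_mul_ab) : ℂ[X] →ₐ[ℂ] Module.End Aᵐᵒᵖ (P oneS)) := by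
  intro ψ
  have hu : IsIdempotentElem oneS := oneS_mul_oneS
  obtain ⟨c, d, hcd⟩ :=
    Submodule.mem_span_pair.mp (hu.mul_end_apply_mul ψ ▸ oneS_mul_mul_oneS_mem_span _)
  refine ⟨C c + C d * X, LinearMap.ext fun x => Subtype.ext ?_⟩
  rw [show (ψ x : A) = _ from hu.end_apply_eq_mul ψ x, ← hcd]
  simp [lmul, add_mul, hu.mul_eq_self_of_mem_span x.2]

theorem end_P_oneE_exists_eq_smul_id (ψ : Module.End Aᵐᵒᵖ (P oneE)) :
    ∃ c : ℂ, ψ = c • LinearMap.id := by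
  have hu : IsIdempotentElem oneE := oneE_mul_oneE
  obtain ⟨c, hc⟩ :=
    Submodule.mem_span_singleton.mp (hu.mul_end_apply_mul ψ ▸ oneE_mul_mul_oneE_mem_span _)
  refine ⟨c, LinearMap.ext fun x => Subtype.ext ?_⟩
  rw [show (ψ x : A) = _ from hu.end_apply_eq_mul ψ x, ← hc, smul_mul_assoc,
    hu.mul_eq_self_of_mem_span x.2]
  rfl

/-- `End_A(P(s)) ≅ ℂ[X]/(X²)` as a `ℂ`-algebra, via an isomorphism
sending `X` to left multiplication by the loop `ab`; in particular `ab ≠ 0` and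
`(ab)² = 0`.  Moreover every endomorphism of `P(e)` is a scalar multiple of the
identity. -/
theorem endPs_iso_dual_numbers_and_endPe_scalar :
    (∃ φ : (ℂ[X] ⧸ Ideal.span {(X : ℂ[X]) ^ 2}) ≃ₐ[ℂ] Module.End Aᵐᵒᵖ ↥(P oneS),
        φ (Ideal.Quotient.mk _ (X : ℂ[X])) = lmul oneS oneS_mul_ab) ∧
    ab ≠ 0 ∧ ab * ab = 0 ∧
    ∀ ψ : Module.End Aᵐᵒᵖ ↥(P oneE), ∃ c : ℂ, ψ = c • LinearMap.id :=
  ⟨exists_algEquiv_quotient_X_sq (B := Module.End Aᵐᵒᵖ (P oneS)) lmul_ab_mul_self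
      lmul_ab_notMem_range aeval_lmul_ab_surjective,
    linearIndependent_oneS_ab.ne_zero 1, ab_mul_ab, end_P_oneE_exists_eq_smul_id⟩

end Sl2Q
end

section
/- For every n ≥ 2 and all 0 ≤ i, j ≤ n−1, the ℂ-dimension of the space of right A_n^𝔭-module homomorphisms Hom_{A_n^𝔭}(P(σ_j), P(σ_i)) ≅ 1_{σ_i}·A_n^𝔭·1_{σ_j} equals: 2 if i = j ≥ 1; 1 if i = j = 0; 1 if |i − j| = 1; and 0 if |i − j| ≥ 2. Consequently dim_ℂ A_n^𝔭 = 4n − 3. -/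
/-!
The `4n - 3` paths `1_{σ_i}` (`0 ≤ i ≤ n - 1`), `α_k`, `β_k` and `x_k = α_k β_k`
(`1 ≤ k ≤ n - 1`) form a basis of `A_n^𝔭`. They span because, by the relations, the product of
two of them is zero or again one of them (`β_k α_k = x_{k-1}`, and `β₁ α₁ = 0`). They are
linearly independent because their images in the left regular representation, written out in
coordinates, are: a basis path `q` is the only one sending the trivial path at the source of `q`
to an element with nonzero `q`-coordinate.

Evaluation at the generator identifies `Hom(P(σ_j), P(σ_i))` with the corner
`1_{σ_i} A_n^𝔭 1_{σ_j}`, which is spanned by the basis paths from `σ_j` to `σ_i`: the trivial path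
and the loop `x_i` if `i = j ≥ 1`, only the trivial path if `i = j = 0`, one arrow if `|i - j| = 1`,
and none otherwise.
-/

open CategoryTheory MulOpposite Polynomial

namespace SlnQ

/-- Generators of the path algebra of the quiver
`σ₀ ⇄ σ₁ ⇄ ⋯ ⇄ σ_{n-1}`:
`Sum.inl i ↦` the trivial path at `σ_i`,
`Sum.inr (Sum.inl i) ↦ α_i : σ_{i-1} → σ_i`,
`Sum.inr (Sum.inr i) ↦ β_i : σ_i → σ_{i-1}`. -/
abbrev Gen : Type := ℕ ⊕ (ℕ ⊕ ℕ)

noncomputable def vg (i : ℕ) : FreeAlgebra ℂ Gen := FreeAlgebra.ι ℂ (Sum.inl i)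
noncomputable def ag (i : ℕ) : FreeAlgebra ℂ Gen := FreeAlgebra.ι ℂ (Sum.inr (Sum.inl i))
noncomputable def bg (i : ℕ) : FreeAlgebra ℂ Gen := FreeAlgebra.ι ℂ (Sum.inr (Sum.inr i))

/-- The defining relations of `A_n^𝔭`: the trivial paths at the vertices
`σ₀, …, σ_{n-1}` are orthogonal idempotents summing to `1`; the arrows
`α_i : σ_{i-1} → σ_i` and `β_i : σ_i → σ_{i-1}` (for `1 ≤ i ≤ n-1`) are compatible
with their sources and targets (generators with out-of-range indices are zero);
and the quiver relations hold: `β₁ ∘ α₁ = 0` at `σ₀` (written `β₁ * α₁`, first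
`α₁` then `β₁`), the two loops `α_i ∘ β_i` and `β_{i+1} ∘ α_{i+1}` at `σ_i`
coincide for `1 ≤ i ≤ n-2`, and all monotone length-two paths vanish. -/
inductive Rel (n : ℕ) : FreeAlgebra ℂ Gen → FreeAlgebra ℂ Gen → Prop
  | idem (i : ℕ) : Rel n (vg i * vg i) (vg i)
  | orth (i j : ℕ) (h : i ≠ j) : Rel n (vg i * vg j) 0
  | vzero (i : ℕ) (h : n ≤ i) : Rel n (vg i) 0
  | sum_one : Rel n ((Finset.range n).sum vg) 1
  | azero (i : ℕ) (h : i = 0 ∨ n ≤ i) : Rel n (ag i) 0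
  | bzero (i : ℕ) (h : i = 0 ∨ n ≤ i) : Rel n (bg i) 0
  | a_tgt (i : ℕ) : Rel n (vg i * ag i) (ag i)
  | a_src (i : ℕ) : Rel n (ag i * vg (i - 1)) (ag i)
  | b_tgt (i : ℕ) : Rel n (vg (i - 1) * bg i) (bg i)
  | b_src (i : ℕ) : Rel n (bg i * vg i) (bg i)
  | ba_one : Rel n (bg 1 * ag 1) 0
  | loops (i : ℕ) (h : 1 ≤ i) (h' : i ≤ n - 2) :
      Rel n (ag i * bg i) (bg (i + 1) * ag (i + 1))
  | aa (i : ℕ) : Rel n (ag (i + 1) * ag i) 0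
  | bb (i : ℕ) : Rel n (bg i * bg (i + 1)) 0

/-- The algebra `A_n^𝔭`, presented as the path algebra of the quiver
`σ₀ ⇄ σ₁ ⇄ ⋯ ⇄ σ_{n-1}` modulo the relations above. -/
def An (n : ℕ) : Type := RingQuot (Rel n)

noncomputable instance (n : ℕ) : Ring (An n) := inferInstanceAs (Ring (RingQuot (Rel n)))
noncomputable instance (n : ℕ) : Algebra ℂ (An n) :=
  inferInstanceAs (Algebra ℂ (RingQuot (Rel n)))

noncomputable def toAn (n : ℕ) : FreeAlgebra ℂ Gen →ₐ[ℂ] An n := RingQuot.mkAlgHom ℂ (Rel n)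

/-- the idempotent `1_{σ_i}` -/
noncomputable def e (n i : ℕ) : An n := toAn n (vg i)
/-- the arrow `α_i : σ_{i-1} → σ_i` -/
noncomputable def a (n i : ℕ) : An n := toAn n (ag i)
/-- the arrow `β_i : σ_i → σ_{i-1}` -/
noncomputable def b (n i : ℕ) : An n := toAn n (bg i)
/-- the loop `x_i = α_i ∘ β_i` at `σ_i` (first `β_i`, then `α_i`) -/
noncomputable def x (n i : ℕ) : An n := a n i * b n i

lemma rel_eq {n : ℕ} {p q : FreeAlgebra ℂ Gen} (h : Rel n p q) : toAn n p = toAn n q :=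
  RingQuot.mkAlgHom_rel ℂ h

lemma e_mul_a (n i : ℕ) : e n i * a n i = a n i := by
  rw [e, a, ← map_mul]; exact rel_eq (Rel.a_tgt i)

lemma e_mul_b (n i : ℕ) : e n (i - 1) * b n i = b n i := by
  rw [e, b, ← map_mul]; exact rel_eq (Rel.b_tgt i)

lemma e_mul_x (n i : ℕ) : e n i * x n i = x n i := by
  rw [x, ← mul_assoc, e_mul_a]

instance (n : ℕ) : IsScalarTower ℂ (An n)ᵐᵒᵖ (An n) :=
  ⟨fun c r m => by
    rw [MulOpposite.smul_eq_mul_unop, MulOpposite.smul_eq_mul_unop, MulOpposite.unop_smul,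
      mul_smul_comm]⟩

instance (n : ℕ) : SMulCommClass (An n)ᵐᵒᵖ ℂ (An n) :=
  ⟨fun r c m => by
    rw [MulOpposite.smul_eq_mul_unop, MulOpposite.smul_eq_mul_unop, smul_mul_assoc]⟩

/-- `P(σ_i) = 1_{σ_i}·A_n^𝔭`, as a right `A_n^𝔭`-module
(i.e. a module over `(A_n^𝔭)ᵐᵒᵖ`). -/
noncomputable def P (n i : ℕ) : Submodule (An n)ᵐᵒᵖ (An n) :=
  Submodule.span (An n)ᵐᵒᵖ {e n i}

lemma mem_P {n i : ℕ} {z : An n} (h : e n i * z = z) : z ∈ P n i :=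
  Submodule.mem_span_singleton.mpr ⟨op z, by rw [op_smul_eq_mul, h]⟩

instance {n : ℕ} (p : Submodule (An n)ᵐᵒᵖ (An n)) : SMulCommClass (An n)ᵐᵒᵖ ℂ ↥p :=
  ⟨fun r c m => Subtype.ext (smul_comm r c (m : An n))⟩

instance {n : ℕ} (p : Submodule (An n)ᵐᵒᵖ (An n)) : IsScalarTower ℂ (An n)ᵐᵒᵖ ↥p :=
  ⟨fun c r m => Subtype.ext (smul_assoc c r (m : An n))⟩

/-- Left multiplication by `z` as a homomorphism of right `A_n^𝔭`-modules
`P(σ_i) ⟶ P(σ_j)`, where `1_{σ_j} * z = z`. -/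
noncomputable def lmul (n i : ℕ) {j : ℕ} {z : An n} (h : e n j * z = z) :
    ↥(P n i) →ₗ[(An n)ᵐᵒᵖ] ↥(P n j) where
  toFun m := ⟨z * (m : An n), mem_P (by rw [← mul_assoc, h])⟩
  map_add' m m' := Subtype.ext (by simp [mul_add])
  map_smul' r m := Subtype.ext (by simp [MulOpposite.smul_eq_mul_unop, mul_assoc])

end SlnQ

section IdempotentCorner

variable {K R : Type*} [CommRing K] [Ring R] [Algebra K R] {e f : R}

theorem IsIdempotentElem.mem_span_singleton_op_iff (he : IsIdempotentElem e) {z : R} :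
    z ∈ Submodule.span Rᵐᵒᵖ {e} ↔ e * z = z := by
  refine ⟨fun hz => ?_, fun hz =>
    Submodule.mem_span_singleton.mpr ⟨op z, by rw [op_smul_eq_mul, hz]⟩⟩
  obtain ⟨r, rfl⟩ := Submodule.mem_span_singleton.mp hz
  rw [MulOpposite.smul_eq_mul_unop, ← mul_assoc, he.eq]

variable (K) in
def evalGenerator (e : R) (q : Submodule Rᵐᵒᵖ R) :
    (Submodule.span Rᵐᵒᵖ {e} →ₗ[Rᵐᵒᵖ] q) →ₗ[K] R where
  toFun φ := φ ⟨e, Submodule.mem_span_singleton_self e⟩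
  map_add' _ _ := rfl
  map_smul' _ _ := rfl

theorem evalGenerator_injective (q : Submodule Rᵐᵒᵖ R) :
    Function.Injective (evalGenerator K e q) := by
  intro φ ψ h
  ext ⟨z, hz⟩
  obtain ⟨r, rfl⟩ := Submodule.mem_span_singleton.mp hz
  have hgen : (⟨r • e, hz⟩ : Submodule.span Rᵐᵒᵖ {e})
      = r • ⟨e, Submodule.mem_span_singleton_self e⟩ := rfl
  rw [hgen, map_smul, map_smul, Subtype.ext h]

theorem range_evalGenerator (he : IsIdempotentElem e) (hf : IsIdempotentElem f) :
    LinearMap.range (evalGenerator K e (Submodule.span Rᵐᵒᵖ {f}))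
      = LinearMap.range (LinearMap.mulLeftRight K (f, e)) := by
  apply le_antisymm
  · rintro _ ⟨φ, rfl⟩
    set g : Submodule.span Rᵐᵒᵖ {e} := ⟨e, Submodule.mem_span_singleton_self e⟩
    have hfix_left : f * (φ g : R) = φ g := hf.mem_span_singleton_op_iff.mp (φ g).2
    have hfix_right : (φ g : R) * e = φ g := by
      have hg : op e • g = g := Subtype.ext (by simp [g, he.eq])
      rw [← op_smul_eq_mul, ← Submodule.coe_smul, ← map_smul, hg]
    exact ⟨φ g, by rw [LinearMap.mulLeftRight_apply, hfix_left, hfix_right]; rfl⟩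
  · rintro _ ⟨z, rfl⟩
    have hmaps : ∀ m ∈ Submodule.span Rᵐᵒᵖ {e},
        LinearMap.mulLeft Rᵐᵒᵖ (f * z) m ∈ Submodule.span Rᵐᵒᵖ {f} := fun m _ =>
      hf.mem_span_singleton_op_iff.mpr
        (by rw [LinearMap.mulLeft_apply, ← mul_assoc, ← mul_assoc, hf.eq])
    exact ⟨(LinearMap.mulLeft Rᵐᵒᵖ (f * z)).restrict hmaps, rfl⟩

theorem finrank_hom_span_idempotent (he : IsIdempotentElem e) (hf : IsIdempotentElem f) :
    Module.finrank K (Submodule.span Rᵐᵒᵖ {e} →ₗ[Rᵐᵒᵖ] Submodule.span Rᵐᵒᵖ {f})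
      = Module.finrank K (LinearMap.range (LinearMap.mulLeftRight K (f, e))) := by
  rw [← range_evalGenerator he hf]
  exact (LinearEquiv.ofInjective _ (evalGenerator_injective _)).finrank_eq

end IdempotentCorner

theorem Module.Basis.finrank_range_of_apply_eq_ite {K V ι : Type*} [DivisionRing K]
    [AddCommGroup V] [Module K V] [Fintype ι] (B : Module.Basis ι K V)
    (π : V →ₗ[K] V) (S : ι → Prop) [DecidablePred S]
    (hπ : ∀ p, π (B p) = if S p then B p else 0) :
    Module.finrank K (LinearMap.range π) = Fintype.card {p // S p} := by
  have hrange : LinearMap.range π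
      = Submodule.span K (Set.range (B ∘ Subtype.val : {p // S p} → V)) := by
    apply le_antisymm
    · rw [LinearMap.range_eq_map, ← B.span_eq, Submodule.map_span, Submodule.span_le]
      rintro _ ⟨_, ⟨p, rfl⟩, rfl⟩
      rw [SetLike.mem_coe, hπ]
      split_ifs with hp
      · exact Submodule.subset_span ⟨⟨p, hp⟩, rfl⟩
      · exact Submodule.zero_mem _
    · rw [Submodule.span_le]
      rintro _ ⟨⟨p, hp⟩, rfl⟩
      exact ⟨B p, by rw [hπ, if_pos hp]; rfl⟩
  rw [hrange, finrank_span_eq_card (B.linearIndependent.comp _ Subtype.val_injective)]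

theorem Fin.sum_ite_one_zero_of_iff {m c : ℕ} {Q : Prop} [Decidable Q] (P : Fin m → Prop)
    [DecidablePred P] (hP : ∀ k, P k ↔ (k : ℕ) = c ∧ Q) :
    ∑ k : Fin m, (if P k then 1 else 0) = if c < m ∧ Q then 1 else 0 := by
  rw [Finset.sum_boole, Nat.cast_id]
  split_ifs with h
  · rw [Finset.card_eq_one]
    exact ⟨⟨c, h.1⟩, by ext k; simp [hP, Fin.ext_iff, h.2]⟩
  · rw [Finset.card_eq_zero, Finset.filter_eq_empty_iff]
    intro k _ hk
    obtain ⟨hk, hQ⟩ := (hP k).1 hk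
    exact h ⟨hk ▸ k.2, hQ⟩

namespace SlnQ

section MultiplicationTable

variable (n : ℕ)

lemma e_eq_zero {i : ℕ} (h : n ≤ i) : e n i = 0 := by
  simpa [e] using rel_eq (Rel.vzero (n := n) i h)

lemma a_eq_zero {i : ℕ} (h : i = 0 ∨ n ≤ i) : a n i = 0 := by
  simpa [a] using rel_eq (Rel.azero (n := n) i h)

lemma b_eq_zero {i : ℕ} (h : i = 0 ∨ n ≤ i) : b n i = 0 := by
  simpa [b] using rel_eq (Rel.bzero (n := n) i h)

lemma isIdempotentElem_e (i : ℕ) : IsIdempotentElem (e n i) := by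
  rw [IsIdempotentElem, e, ← map_mul]; exact rel_eq (Rel.idem i)

lemma e_mul_e (i j : ℕ) : e n i * e n j = if i = j then e n i else 0 := by
  split_ifs with h
  · rw [h]; exact isIdempotentElem_e n j
  · simpa [e] using rel_eq (Rel.orth (n := n) i j h)

lemma a_mul_e_self_sub_one (k : ℕ) : a n k * e n (k - 1) = a n k := by
  rw [a, e, ← map_mul]; exact rel_eq (Rel.a_src k)

lemma b_mul_e_self (k : ℕ) : b n k * e n k = b n k := by
  rw [b, e, ← map_mul]; exact rel_eq (Rel.b_src k)

lemma a_mul_e (k i : ℕ) : a n k * e n i = if k - 1 = i then a n k else 0 := by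
  rw [← a_mul_e_self_sub_one, mul_assoc, e_mul_e]
  split_ifs <;> simp

lemma b_mul_e (k i : ℕ) : b n k * e n i = if k = i then b n k else 0 := by
  rw [← b_mul_e_self, mul_assoc, e_mul_e]
  split_ifs <;> simp

lemma e_mul_a_eq_ite (i k : ℕ) : e n i * a n k = if i = k then a n k else 0 := by
  rw [← e_mul_a n k, ← mul_assoc, e_mul_e]
  split_ifs with h <;> simp [h]

lemma e_mul_b_eq_ite (i k : ℕ) : e n i * b n k = if i = k - 1 then b n k else 0 := by
  rw [← e_mul_b n k, ← mul_assoc, e_mul_e]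
  split_ifs with h <;> simp [h]

lemma a_mul_a (k j : ℕ) : a n k * a n j = 0 := by
  rcases Nat.eq_zero_or_pos k with rfl | hk
  · rw [a_eq_zero n (Or.inl rfl), zero_mul]
  by_cases h : k = j + 1
  · subst h
    simpa [a] using rel_eq (Rel.aa (n := n) j)
  · rw [← e_mul_a n j, ← mul_assoc, a_mul_e, if_neg (show k - 1 ≠ j by omega), zero_mul]

lemma b_mul_b (k j : ℕ) : b n k * b n j = 0 := by
  rcases Nat.eq_zero_or_pos j with rfl | hj
  · rw [b_eq_zero n (Or.inl rfl), mul_zero]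
  by_cases h : j = k + 1
  · subst h
    simpa [b] using rel_eq (Rel.bb (n := n) k)
  · rw [← e_mul_b n j, ← mul_assoc, b_mul_e, if_neg (show k ≠ j - 1 by omega), zero_mul]

lemma a_mul_b (k j : ℕ) : a n k * b n j = if k = j then x n k else 0 := by
  split_ifs with h
  · rw [h, x]
  · rcases Nat.eq_zero_or_pos k with rfl | hk
    · rw [a_eq_zero n (Or.inl rfl), zero_mul]
    rcases Nat.eq_zero_or_pos j with rfl | hj
    · rw [b_eq_zero n (Or.inl rfl), mul_zero]
    rw [← e_mul_b n j, ← mul_assoc, a_mul_e, if_neg (show k - 1 ≠ j - 1 by omega), zero_mul]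

lemma b_mul_a_self {k : ℕ} (h2 : 2 ≤ k) (h3 : k ≤ n - 1) : b n k * a n k = x n (k - 1) := by
  have hloop := rel_eq (Rel.loops (n := n) (k - 1) (by omega) (by omega))
  rw [Nat.sub_add_cancel (by omega : 1 ≤ k)] at hloop
  rw [x, a, b, b, a, ← map_mul, ← map_mul, hloop]

lemma b_mul_a (k j : ℕ) :
    b n k * a n j = if k = j ∧ 2 ≤ k ∧ k ≤ n - 1 then x n (k - 1) else 0 := by
  split_ifs with h
  · obtain ⟨rfl, h2, h3⟩ := h
    exact b_mul_a_self n h2 h3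
  by_cases hkj : k = j
  · subst hkj
    rcases (by omega : k = 0 ∨ k = 1 ∨ n - 1 < k) with rfl | rfl | hk
    · rw [b_eq_zero n (Or.inl rfl), zero_mul]
    · simpa [a, b] using rel_eq (Rel.ba_one (n := n))
    · rw [a_eq_zero n (Or.inr (by omega)), mul_zero]
  · rw [← e_mul_a n j, ← mul_assoc, b_mul_e, if_neg hkj, zero_mul]

lemma x_mul_e (k i : ℕ) : x n k * e n i = if k = i then x n k else 0 := by
  rw [x, mul_assoc, b_mul_e]
  split_ifs <;> simp

lemma e_mul_x_eq_ite (i k : ℕ) : e n i * x n k = if i = k then x n k else 0 := by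
  rw [x, ← mul_assoc, e_mul_a_eq_ite]
  split_ifs <;> simp

lemma a_mul_x (k j : ℕ) : a n k * x n j = 0 := by
  rw [x, ← mul_assoc, a_mul_a, zero_mul]

lemma x_mul_b (k j : ℕ) : x n k * b n j = 0 := by
  rw [x, mul_assoc, b_mul_b, mul_zero]

lemma x_mul_a (k j : ℕ) : x n k * a n j = 0 := by
  rw [x, mul_assoc, b_mul_a]
  split_ifs
  · exact a_mul_x n k (k - 1)
  · rw [mul_zero]

lemma b_mul_x (k j : ℕ) : b n k * x n j = 0 := by
  rw [x, ← mul_assoc, b_mul_a]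
  split_ifs
  · exact x_mul_b n (k - 1) j
  · rw [zero_mul]

lemma x_mul_x (k j : ℕ) : x n k * x n j = 0 := by
  rw [x, mul_assoc, b_mul_x, mul_zero]

lemma sum_e_eq_one : ∑ i ∈ Finset.range n, e n i = 1 := by
  simpa [e] using rel_eq (Rel.sum_one (n := n))

end MultiplicationTable

section Paths

variable (n : ℕ)

abbrev PathIdx (n : ℕ) : Type := Fin n ⊕ (Fin (n - 1) ⊕ (Fin (n - 1) ⊕ Fin (n - 1)))

noncomputable def path : PathIdx n → An n
  | .inl i => e n i
  | .inr (.inl k) => a n (k + 1)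
  | .inr (.inr (.inl k)) => b n (k + 1)
  | .inr (.inr (.inr k)) => x n (k + 1)

def tgt : PathIdx n → ℕ
  | .inl i => i
  | .inr (.inl k) => k + 1
  | .inr (.inr (.inl k)) => k
  | .inr (.inr (.inr k)) => k + 1

def src : PathIdx n → ℕ
  | .inl i => i
  | .inr (.inl k) => k
  | .inr (.inr (.inl k)) => k + 1
  | .inr (.inr (.inr k)) => k + 1

lemma e_mul_path (i : ℕ) (p : PathIdx n) :
    e n i * path n p = if tgt n p = i then path n p else 0 := by
  rcases p with i' | k | k | k <;> simp only [path, tgt]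
  · rw [e_mul_e]; split_ifs <;> simp_all
  · rw [e_mul_a_eq_ite]; split_ifs <;> simp_all
  · rw [e_mul_b_eq_ite, Nat.add_sub_cancel]; split_ifs <;> simp_all
  · rw [e_mul_x_eq_ite]; split_ifs <;> simp_all

lemma path_mul_e (p : PathIdx n) (j : ℕ) :
    path n p * e n j = if src n p = j then path n p else 0 := by
  rcases p with i' | k | k | k <;> simp only [path, src]
  · rw [e_mul_e]; rfl
  · rw [a_mul_e, Nat.add_sub_cancel]; rfl
  · rw [b_mul_e]; rfl
  · rw [x_mul_e]; rfl

lemma e_mul_path_mul_e (i j : ℕ) (p : PathIdx n) :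
    e n i * path n p * e n j = if tgt n p = i ∧ src n p = j then path n p else 0 := by
  rw [e_mul_path]
  split_ifs with ht hts hts
  · rw [path_mul_e, if_pos hts.2]
  · rw [path_mul_e, if_neg fun hs => hts ⟨ht, hs⟩]
  · exact absurd hts.1 ht
  · rw [zero_mul]

lemma path_mul_path_mem_span (p q : PathIdx n) :
    path n p * path n q ∈ Submodule.span ℂ (Set.range (path n)) := by
  have mem : ∀ r, path n r ∈ Submodule.span ℂ (Set.range (path n)) := fun r =>
    Submodule.subset_span ⟨r, rfl⟩
  have zero_mem := (Submodule.span ℂ (Set.range (path n))).zero_mem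
  rcases p with i | k | k | k <;> rcases q with i' | k' | k' | k' <;> simp only [path]
  · rw [e_mul_e]; split_ifs; exacts [mem (.inl i), zero_mem]
  · rw [e_mul_a_eq_ite]; split_ifs; exacts [mem (.inr (.inl k')), zero_mem]
  · rw [e_mul_b_eq_ite]; split_ifs; exacts [mem (.inr (.inr (.inl k'))), zero_mem]
  · rw [e_mul_x_eq_ite]; split_ifs; exacts [mem (.inr (.inr (.inr k'))), zero_mem]
  · rw [a_mul_e]; split_ifs; exacts [mem (.inr (.inl k)), zero_mem]
  · rw [a_mul_a]; exact zero_mem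
  · rw [a_mul_b]; split_ifs; exacts [mem (.inr (.inr (.inr k))), zero_mem]
  · rw [a_mul_x]; exact zero_mem
  · rw [b_mul_e]; split_ifs; exacts [mem (.inr (.inr (.inl k))), zero_mem]
  · rw [b_mul_a]
    split_ifs with h
    · rw [show (k : ℕ) + 1 - 1 = k - 1 + 1 by omega]
      exact mem (.inr (.inr (.inr ⟨k - 1, by omega⟩)))
    · exact zero_mem
  · rw [b_mul_b]; exact zero_mem
  · rw [b_mul_x]; exact zero_mem
  · rw [x_mul_e]; split_ifs; exacts [mem (.inr (.inr (.inr k))), zero_mem]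
  · rw [x_mul_a]; exact zero_mem
  · rw [x_mul_b]; exact zero_mem
  · rw [x_mul_x]; exact zero_mem

lemma toAn_ι_mem_span_path (g : Gen) :
    toAn n (FreeAlgebra.ι ℂ g) ∈ Submodule.span ℂ (Set.range (path n)) := by
  have zero_mem := (Submodule.span ℂ (Set.range (path n))).zero_mem
  rcases g with i | k | k
  · change e n i ∈ _
    by_cases hi : i < n
    · exact Submodule.subset_span ⟨.inl ⟨i, hi⟩, rfl⟩
    · rwa [e_eq_zero n (by omega)]
  · change a n k ∈ _
    by_cases hk : 1 ≤ k ∧ k ≤ n - 1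
    · rw [← Nat.sub_add_cancel hk.1]
      exact Submodule.subset_span ⟨.inr (.inl ⟨k - 1, by omega⟩), rfl⟩
    · rwa [a_eq_zero n (by omega)]
  · change b n k ∈ _
    by_cases hk : 1 ≤ k ∧ k ≤ n - 1
    · rw [← Nat.sub_add_cancel hk.1]
      exact Submodule.subset_span ⟨.inr (.inr (.inl ⟨k - 1, by omega⟩)), rfl⟩
    · rwa [b_eq_zero n (by omega)]

lemma span_range_path : Submodule.span ℂ (Set.range (path n)) = ⊤ := by
  refine Submodule.eq_top_iff'.mpr fun z => ?_
  obtain ⟨w, rfl⟩ := RingQuot.mkAlgHom_surjective ℂ (Rel n) z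
  change toAn n w ∈ _
  induction w using FreeAlgebra.induction with
  | grade0 c =>
    rw [AlgHom.commutes, Algebra.algebraMap_eq_smul_one, ← sum_e_eq_one]
    refine Submodule.smul_mem _ c (Submodule.sum_mem _ fun i hi => ?_)
    exact Submodule.subset_span ⟨.inl ⟨i, Finset.mem_range.mp hi⟩, rfl⟩
  | grade1 g => exact toAn_ι_mem_span_path n g
  | mul w₁ w₂ h₁ h₂ =>
    rw [map_mul]
    have h := Submodule.mul_mem_mul h₁ h₂
    rw [Submodule.span_mul_span] at h
    refine Submodule.span_le.mpr ?_ h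
    rintro _ ⟨_, ⟨p, rfl⟩, _, ⟨q, rfl⟩, rfl⟩
    exact path_mul_path_mem_span n p q
  | add w₁ w₂ h₁ h₂ => rw [map_add]; exact Submodule.add_mem _ h₁ h₂

end Paths

section Model

/-- Functions of (source, target, length): the paths of `A_n^𝔭` occupy the coordinates
`(i, i, 0)`, `(k - 1, k, 1)`, `(k, k - 1, 1)` and, for the loop at `σ_k`, `(k, k, 2)`. On these
coordinates `modelE`, `modelA`, `modelB` below act as left multiplication by `1_{σ_i}`, `α_k`,
`β_k`, so they contain the left regular representation. -/
abbrev ModelSpace (n : ℕ) : Type := Fin n × Fin n × Fin 3 → ℂ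

/-- The fallback `d` is never reached below: `modelA` and `modelB` only call `finOr` on values
`< n`. -/
def finOr {n : ℕ} (d : Fin n) (m : ℕ) : Fin n := if h : m < n then ⟨m, h⟩ else d

lemma val_finOr {n : ℕ} (d : Fin n) (m : ℕ) :
    (finOr d m : ℕ) = if m < n then m else (d : ℕ) := by
  unfold finOr; split_ifs <;> rfl

noncomputable def modelE (n i : ℕ) : Module.End ℂ (ModelSpace n) where
  toFun f d := if (d.2.1 : ℕ) = i then f d else 0
  map_add' f g := by funext d; simp only [Pi.add_apply]; split_ifs <;> simp
  map_smul' c f := by funext d; simp only [Pi.smul_apply, RingHom.id_apply]; split_ifs <;> simp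

noncomputable def modelA (n k : ℕ) : Module.End ℂ (ModelSpace n) where
  toFun f d :=
    if (d.1 : ℕ) + 1 = k ∧ (d.2.1 : ℕ) = k ∧ (d.2.2 : ℕ) = 1 then f (d.1, d.1, 0)
    else if (d.1 : ℕ) = k ∧ (d.2.1 : ℕ) = k ∧ (d.2.2 : ℕ) = 2 ∧ 1 ≤ k then
      f (d.1, finOr d.1 (k - 1), 1)
    else 0
  map_add' f g := by funext d; simp only [Pi.add_apply]; split_ifs <;> simp
  map_smul' c f := by funext d; simp only [Pi.smul_apply, RingHom.id_apply]; split_ifs <;> simp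

noncomputable def modelB (n k : ℕ) : Module.End ℂ (ModelSpace n) where
  toFun f d :=
    if (d.1 : ℕ) = k ∧ (d.2.1 : ℕ) + 1 = k ∧ (d.2.2 : ℕ) = 1 then f (d.1, d.1, 0)
    else if (d.1 : ℕ) + 1 = k ∧ (d.2.1 : ℕ) + 1 = k ∧ (d.2.2 : ℕ) = 2 ∧ 1 ≤ (d.1 : ℕ) ∧ k < n then
      f (d.1, finOr d.1 k, 1)
    else 0
  map_add' f g := by funext d; simp only [Pi.add_apply]; split_ifs <;> simp
  map_smul' c f := by funext d; simp only [Pi.smul_apply, RingHom.id_apply]; split_ifs <;> simp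

noncomputable def modelGen (n : ℕ) : Gen → Module.End ℂ (ModelSpace n)
  | .inl i => modelE n i
  | .inr (.inl k) => modelA n k
  | .inr (.inr k) => modelB n k

lemma lift_modelGen_rel {n : ℕ} {p q : FreeAlgebra ℂ Gen} (h : Rel n p q) :
    FreeAlgebra.lift ℂ (modelGen n) p = FreeAlgebra.lift ℂ (modelGen n) q := by
  induction h
  case sum_one =>
    refine LinearMap.ext fun f => funext fun d => ?_
    simp [vg, modelGen, modelE, Finset.sum_apply, d.2.1.isLt]
  all_goals
    refine LinearMap.ext fun f => funext fun ⟨u, v, l⟩ => ?_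
    have := u.isLt
    have := v.isLt
    simp only [map_mul, map_zero, vg, ag, bg, FreeAlgebra.lift_ι_apply, modelGen,
      Module.End.mul_apply, modelE, modelA, modelB, LinearMap.coe_mk, AddHom.coe_mk,
      LinearMap.zero_apply, Pi.zero_apply, val_finOr, Fin.val_zero, Fin.val_one]
    split_ifs <;>
      (try simp only [and_false, false_and, and_true, true_and, not_true_eq_false] at *) <;>
      first | rfl | omega

variable (n : ℕ)

noncomputable def modelRep : An n →ₐ[ℂ] Module.End ℂ (ModelSpace n) :=
  RingQuot.liftAlgHom ℂ ⟨FreeAlgebra.lift ℂ (modelGen n), fun _ _ h => lift_modelGen_rel h⟩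

lemma modelRep_toAn (w : FreeAlgebra ℂ Gen) :
    modelRep n (toAn n w) = FreeAlgebra.lift ℂ (modelGen n) w :=
  RingQuot.liftAlgHom_mkAlgHom_apply ℂ _ _ w

lemma modelRep_e (i : ℕ) : modelRep n (e n i) = modelE n i := by
  rw [e, modelRep_toAn, vg, FreeAlgebra.lift_ι_apply]; rfl

lemma modelRep_a (k : ℕ) : modelRep n (a n k) = modelA n k := by
  rw [a, modelRep_toAn, ag, FreeAlgebra.lift_ι_apply]; rfl

lemma modelRep_b (k : ℕ) : modelRep n (b n k) = modelB n k := by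
  rw [b, modelRep_toAn, bg, FreeAlgebra.lift_ι_apply]; rfl

lemma modelRep_x (k : ℕ) : modelRep n (x n k) = modelA n k * modelB n k := by
  rw [x, map_mul, modelRep_a, modelRep_b]

def pathCoord : PathIdx n → Fin n × Fin n × Fin 3
  | .inl i => (i, i, 0)
  | .inr (.inl k) => (⟨k, by omega⟩, ⟨k + 1, by omega⟩, 1)
  | .inr (.inr (.inl k)) => (⟨k + 1, by omega⟩, ⟨k, by omega⟩, 1)
  | .inr (.inr (.inr k)) => (⟨k + 1, by omega⟩, ⟨k + 1, by omega⟩, 2)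

def sourceCoord (p : PathIdx n) : Fin n × Fin n × Fin 3 :=
  ((pathCoord n p).1, (pathCoord n p).1, 0)

lemma modelRep_path_single (p q : PathIdx n) :
    modelRep n (path n p) (Pi.single (sourceCoord n q) 1) (pathCoord n q)
      = if p = q then 1 else 0 := by
  rcases p with i | k | k | k <;> rcases q with i' | k' | k' | k' <;>
    simp only [path, sourceCoord, pathCoord, modelRep_e, modelRep_a, modelRep_b, modelRep_x,
      modelE, modelA, modelB, Module.End.mul_apply, LinearMap.coe_mk, AddHom.coe_mk,
      Fin.val_zero, Fin.val_one, val_finOr, Pi.single_apply, Prod.mk.injEq, Fin.ext_iff,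
      Sum.inl.injEq, Sum.inr.injEq, reduceCtorEq, if_false] <;>
    split_ifs <;>
    (try simp only [and_false, false_and, and_true, true_and, not_true_eq_false] at *) <;>
    first | rfl | omega

lemma linearIndependent_path : LinearIndependent ℂ (path n) := by
  refine LinearIndependent.of_comp (modelRep n).toLinearMap
    (Fintype.linearIndependent_iff.mpr fun c hc q => ?_)
  have hq := congrFun (LinearMap.congr_fun hc (Pi.single (sourceCoord n q) 1)) (pathCoord n q)
  simpa only [Function.comp_apply, AlgHom.toLinearMap_apply, LinearMap.coe_sum,
    Finset.sum_apply, LinearMap.smul_apply, Pi.smul_apply, smul_eq_mul, modelRep_path_single,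
    mul_ite, mul_one, mul_zero, Finset.sum_ite_eq', Finset.mem_univ, if_true,
    LinearMap.zero_apply, Pi.zero_apply] using hq

end Model

section Dimensions

variable (n : ℕ)

noncomputable def pathBasis : Module.Basis (PathIdx n) ℂ (An n) :=
  .mk (linearIndependent_path n) (span_range_path n).ge

lemma pathBasis_apply (p : PathIdx n) : pathBasis n p = path n p :=
  Module.Basis.mk_apply _ _ p

lemma finrank_An : Module.finrank ℂ (An n) = 4 * n - 3 := by
  rw [Module.finrank_eq_card_basis (pathBasis n)]
  simp only [Fintype.card_sum, Fintype.card_fin]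
  omega

lemma card_paths_between {i j : ℕ} (hi : i < n) (hj : j < n) :
    Fintype.card {p : PathIdx n // tgt n p = i ∧ src n p = j} =
      (if i = j then 1 else 0) + (if i = j + 1 then 1 else 0) + (if j = i + 1 then 1 else 0)
        + (if i = j ∧ 1 ≤ i then 1 else 0) := by
  rw [Fintype.card_subtype, Finset.card_filter]
  simp only [Fintype.sum_sum_type]
  rw [Fin.sum_ite_one_zero_of_iff (c := i) (Q := i = j),
    Fin.sum_ite_one_zero_of_iff (c := j) (Q := i = j + 1),
    Fin.sum_ite_one_zero_of_iff (c := i) (Q := j = i + 1),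
    Fin.sum_ite_one_zero_of_iff (c := i - 1) (Q := i = j ∧ 1 ≤ i)]
  · split_ifs <;> omega
  all_goals intro k; simp only [tgt, src]; omega

lemma finrank_hom_P (i j : ℕ) :
    Module.finrank ℂ (P n j →ₗ[(An n)ᵐᵒᵖ] P n i)
      = Fintype.card {p : PathIdx n // tgt n p = i ∧ src n p = j} := by
  rw [P, P, finrank_hom_span_idempotent (isIdempotentElem_e n j) (isIdempotentElem_e n i)]
  refine (pathBasis n).finrank_range_of_apply_eq_ite _ _ fun p => ?_
  rw [pathBasis_apply, LinearMap.mulLeftRight_apply, e_mul_path_mul_e]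

end Dimensions

/-- For `n ≥ 2` and `0 ≤ i, j ≤ n-1`, the dimension of
`Hom_{A_n^𝔭}(P(σ_j), P(σ_i))` is `2` if `i = j ≥ 1`, `1` if `i = j = 0`, `1` if
`|i - j| = 1`, and `0` if `|i - j| ≥ 2`; consequently `dim_ℂ A_n^𝔭 = 4n - 3`. -/
theorem hom_dims_and_dim_An (n : ℕ) (hn : 2 ≤ n) :
    (∀ i : ℕ, 1 ≤ i → i ≤ n - 1 →
      Module.finrank ℂ (↥(P n i) →ₗ[(An n)ᵐᵒᵖ] ↥(P n i)) = 2) ∧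
    Module.finrank ℂ (↥(P n 0) →ₗ[(An n)ᵐᵒᵖ] ↥(P n 0)) = 1 ∧
    (∀ i j : ℕ, i ≤ n - 1 → j ≤ n - 1 → ((i : ℤ) - (j : ℤ)).natAbs = 1 →
      Module.finrank ℂ (↥(P n j) →ₗ[(An n)ᵐᵒᵖ] ↥(P n i)) = 1) ∧
    (∀ i j : ℕ, i ≤ n - 1 → j ≤ n - 1 → 2 ≤ ((i : ℤ) - (j : ℤ)).natAbs →
      Module.finrank ℂ (↥(P n j) →ₗ[(An n)ᵐᵒᵖ] ↥(P n i)) = 0) ∧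
    Module.finrank ℂ (An n) = 4 * n - 3 := by
  refine ⟨fun i h1 hi => ?_, ?_, fun i j hi hj h => ?_, fun i j hi hj h => ?_, finrank_An n⟩
  all_goals rw [finrank_hom_P, card_paths_between n] <;> grind

end SlnQ
end
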